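/- arXiv:1612.00571 — 2 statements merged into one kernel-verified Lean document; each statement's English description precedes it below -/
import Mathlib

section
/- If (λ₁,...,λₙ) is p-larger than (μ₁,...,μₙ) (i.e., ∏_{i=1}^j λ_(i) ≤ ∏_{i=1}^j μ_(i) for all j = 1,...,n), then for every u ∈ (0,1), ∏_{i=1}^n [λᵢ u/(1-(1-λᵢ)u)] ≤ ∏_{i=1}^n [μᵢ u/(1-(1-μᵢ)u)]. (Hence X_{1:n} ≤_{st} Y_{1:n} for series systems under the PO model.) -/
open Finset

/-!
For a fixed baseline value `u`, put `φ t = log (poSurvival u (exp t))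
= t + log u - log (1 - u + u * exp t)`. Its tangent slope `(1 - u) / (1 - u + u * exp t)` is
nonnegative and decreasing, so `φ` is increasing and concave, and taking logarithms turns the
p-larger order into weak submajorization of the sorted `log λ` by the sorted `log μ`.
The tangent-line inequality at the sorted `log μ` bounds `∑ φ (log λ) - ∑ φ (log μ)` by
`-∑ cₖ dₖ`, where the slopes `cₖ` decrease and the partial sums of
`dₖ = log μ₍ₖ₎ - log λ₍ₖ₎` are nonnegative; Abel summation makes this nonpositive.
-/

/-- `x` is p-larger than `y`: partial products of the increasing rearrangement
of `x` are dominated by those of `y`. -/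
def PLarger {n : ℕ} (x y : Fin n → ℝ) : Prop :=
  ∀ j : Fin n, ∏ i ∈ Finset.Iic j, (x ∘ Tuple.sort x) i ≤
    ∏ i ∈ Finset.Iic j, (y ∘ Tuple.sort y) i

section OrderedRing

variable {R : Type*} [CommRing R] [LinearOrder R] [IsStrictOrderedRing R]

theorem Finset.sum_range_mul_nonneg_of_antitone {c d : ℕ → R} {n : ℕ} (hc : Antitone c)
    (hc0 : 0 ≤ c (n - 1)) (hd : ∀ k ≤ n, 0 ≤ ∑ i ∈ range k, d i) :
    0 ≤ ∑ i ∈ range n, c i * d i := by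
  have hparts := sum_range_by_parts c d n
  simp only [smul_eq_mul] at hparts
  rw [hparts, sub_nonneg]
  calc ∑ i ∈ range (n - 1), (c (i + 1) - c i) * ∑ j ∈ range (i + 1), d j
      ≤ 0 := sum_nonpos fun i hi => mul_nonpos_of_nonpos_of_nonneg
          (sub_nonpos.2 (hc i.le_succ)) (hd _ (by simp at hi; omega))
    _ ≤ c (n - 1) * ∑ j ∈ range n, d j := mul_nonneg hc0 (hd n le_rfl)

theorem Fin.sum_Iic_eq_sum_range_clamp {M : Type*} [AddCommMonoid M] {n : ℕ}
    (f : Fin (n + 1) → M) (j : Fin (n + 1)) :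
    ∑ i ∈ Iic j, f i = ∑ k ∈ range (j + 1), f (Fin.clamp k n) := by
  rw [Nat.range_succ_eq_Iic, ← Fin.map_valEmbedding_Iic, sum_map]
  refine sum_congr rfl fun i _ => congrArg f (Fin.ext ?_)
  simp [i.is_le]

theorem Fin.sum_mul_nonneg_of_antitone {n : ℕ} {c d : Fin n → R} (hc : Antitone c)
    (hc0 : ∀ i, 0 ≤ c i) (hd : ∀ j, 0 ≤ ∑ i ∈ Iic j, d i) :
    0 ≤ ∑ i, c i * d i := by
  cases n with
  | zero => simp
  | succ n =>
    have hclamp (i : Fin (n + 1)) : clamp i n = i := Fin.ext (by simp [i.is_le])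
    have hcd := sum_univ_eq_sum_range (fun k => c (clamp k n) * d (clamp k n)) (n + 1)
    simp only [hclamp] at hcd
    rw [hcd]
    refine sum_range_mul_nonneg_of_antitone (hc.comp_monotone Fin.clamp_monotone) (hc0 _) ?_
    rintro (_ | k) hk
    · simp
    · have hk : min k n = k := by omega
      simpa only [sum_Iic_eq_sum_range_clamp, coe_clamp, hk] using hd (clamp k n)

theorem Fin.sum_le_sum_of_sum_Iic_le_of_tangent {n : ℕ} {φ g : R → R}
    (hφ : ∀ s t, φ t - φ s ≤ g s * (t - s)) (hg : Antitone g) (hg0 : ∀ s, 0 ≤ g s)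
    {a b : Fin n → R} (hb : Monotone b)
    (hab : ∀ j, ∑ i ∈ Iic j, a i ≤ ∑ i ∈ Iic j, b i) :
    ∑ i, φ (a i) ≤ ∑ i, φ (b i) := by
  have habel : 0 ≤ ∑ i, g (b i) * (b i - a i) :=
    Fin.sum_mul_nonneg_of_antitone (hg.comp_monotone hb) (fun i => hg0 _)
      fun j => by simpa only [sum_sub_distrib, sub_nonneg] using hab j
  rw [← sub_nonpos, ← sum_sub_distrib]
  calc ∑ i, (φ (a i) - φ (b i)) ≤ ∑ i, g (b i) * (a i - b i) :=
        sum_le_sum fun i _ => hφ _ _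
    _ = -∑ i, g (b i) * (b i - a i) := by
        rw [← sum_neg_distrib]
        simp only [← mul_neg, neg_sub]
    _ ≤ 0 := neg_nonpos.2 habel

end OrderedRing

namespace Real

theorem one_sub_add_mul_exp_pos {u : ℝ} (hu0 : 0 ≤ u) (hu1 : u ≤ 1) (t : ℝ) :
    0 < 1 - u + u * exp t := by
  rcases hu1.lt_or_eq with hu1 | rfl
  · have := mul_nonneg hu0 (exp_pos t).le
    linarith
  · simpa using exp_pos t

theorem mul_exp_div_mul_sub_le_log_sub_log {u : ℝ} (hu0 : 0 ≤ u) (hu1 : u ≤ 1) (s t : ℝ) :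
    u * exp s / (1 - u + u * exp s) * (t - s) ≤
      log (1 - u + u * exp t) - log (1 - u + u * exp s) := by
  have hPs := one_sub_add_mul_exp_pos hu0 hu1 s
  set α := u * exp s / (1 - u + u * exp s) with hα
  have hα0 : 0 ≤ α := by positivity
  have hα1 : α ≤ 1 := (div_le_one hPs).2 (by linarith)
  have hratio : (1 - u + u * exp t) / (1 - u + u * exp s) = α * exp (t - s) + (1 - α) := by
    rw [hα, exp_sub]
    field_simp
    ring
  have hconv : exp (α * (t - s)) ≤ α * exp (t - s) + (1 - α) := by
    simpa using convexOn_exp.2 (Set.mem_univ (t - s)) (Set.mem_univ 0) hα0 (by linarith) (by ring)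
  rw [← log_div (one_sub_add_mul_exp_pos hu0 hu1 t).ne' hPs.ne', hratio,
    ← log_exp (α * (t - s))]
  exact log_le_log (exp_pos _) hconv

end Real

open Real

noncomputable def poSurvival (u l : ℝ) : ℝ := l * u / (1 - (1 - l) * u)

section poSurvival

variable {u : ℝ}

theorem poSurvival_pos (hu0 : 0 < u) (hu1 : u ≤ 1) {l : ℝ} (hl : 0 < l) :
    0 < poSurvival u l := by
  have hden : 0 < 1 - (1 - l) * u := by nlinarith
  unfold poSurvival
  positivity

theorem log_poSurvival_exp (hu0 : 0 < u) (hu1 : u ≤ 1) (t : ℝ) :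
    log (poSurvival u (exp t)) = t + log u - log (1 - u + u * exp t) := by
  have hP := one_sub_add_mul_exp_pos hu0.le hu1 t
  rw [poSurvival, show 1 - (1 - exp t) * u = 1 - u + u * exp t by ring,
    log_div (by positivity) hP.ne', log_mul (exp_pos t).ne' hu0.ne', log_exp]

theorem log_poSurvival_exp_sub_le (hu0 : 0 < u) (hu1 : u ≤ 1) (s t : ℝ) :
    log (poSurvival u (exp t)) - log (poSurvival u (exp s)) ≤
      (1 - u) / (1 - u + u * exp s) * (t - s) := by
  have hP := one_sub_add_mul_exp_pos hu0.le hu1 s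
  have hslope : (1 - u) / (1 - u + u * exp s) = 1 - u * exp s / (1 - u + u * exp s) := by
    field_simp
    ring
  rw [log_poSurvival_exp hu0 hu1, log_poSurvival_exp hu0 hu1, hslope]
  linarith [mul_exp_div_mul_sub_le_log_sub_log hu0.le hu1 s t]

theorem antitone_one_sub_div_one_sub_add_mul_exp (hu0 : 0 ≤ u) (hu1 : u ≤ 1) :
    Antitone fun s => (1 - u) / (1 - u + u * exp s) :=
  fun s t hst => div_le_div_of_nonneg_left (by linarith) (one_sub_add_mul_exp_pos hu0 hu1 s)
    (by gcongr)

end poSurvival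

theorem prod_le_prod_of_pLarger {n : ℕ} {lam mu : Fin n → ℝ} (hlam : ∀ i, 0 < lam i)
    (hmu : ∀ i, 0 < mu i) (hp : PLarger lam mu) {F g : ℝ → ℝ}
    (hF : ∀ x, 0 < x → 0 < F x)
    (hFg : ∀ s t, log (F (exp t)) - log (F (exp s)) ≤ g s * (t - s))
    (hg : Antitone g) (hg0 : ∀ s, 0 ≤ g s) :
    ∏ i, F (lam i) ≤ ∏ i, F (mu i) := by
  have hlog_sorted {x : Fin n → ℝ} (hx : ∀ i, 0 < x i) :
      ∑ i, log (F (x i)) = ∑ i, log (F (exp (log (x (Tuple.sort x i))))) := by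
    simp only [exp_log (hx _)]
    exact (Equiv.sum_comp (Tuple.sort x) fun i => log (F (x i))).symm
  have hlog_partial {x : Fin n → ℝ} (hx : ∀ i, 0 < x i) (j : Fin n) :
      ∑ i ∈ Iic j, log (x (Tuple.sort x i)) = log (∏ i ∈ Iic j, (x ∘ Tuple.sort x) i) :=
    (log_prod fun i _ => (hx _).ne').symm
  rw [← log_le_log_iff (prod_pos fun i _ => hF _ (hlam i)) (prod_pos fun i _ => hF _ (hmu i)),
    log_prod fun i _ => (hF _ (hlam i)).ne', log_prod fun i _ => (hF _ (hmu i)).ne',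
    hlog_sorted hlam, hlog_sorted hmu]
  refine Fin.sum_le_sum_of_sum_Iic_le_of_tangent hFg hg hg0 ?_ fun j => ?_
  · exact fun i j hij => log_le_log (hmu _) (Tuple.monotone_sort mu hij)
  · rw [hlog_partial hlam, hlog_partial hmu]
    exact log_le_log (prod_pos fun i _ => hlam _) (hp j)

theorem series_po_st_order_of_pLarger {n : ℕ} (lam mu : Fin n → ℝ)
    (hlam : ∀ i, 0 < lam i) (hmu : ∀ i, 0 < mu i)
    (hp : PLarger lam mu) :
    ∀ u : ℝ, u ∈ Set.Ioo (0:ℝ) 1 →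
      ∏ i, lam i * u / (1 - (1 - lam i) * u) ≤
        ∏ i, mu i * u / (1 - (1 - mu i) * u) := by
  rintro u ⟨hu0, hu1⟩
  exact prod_le_prod_of_pLarger (F := poSurvival u) hlam hmu hp
    (fun _ => poSurvival_pos hu0 hu1.le) (log_poSurvival_exp_sub_le hu0 hu1.le)
    (antitone_one_sub_div_one_sub_add_mul_exp hu0.le hu1.le)
    fun s => div_nonneg (by linarith) (one_sub_add_mul_exp_pos hu0.le hu1.le s).le
end

section
/- Let λ₁,...,λₙ > 0 and λ ≥ (1/n)∑_{i=1}^n λᵢ. Then the function u ↦ [(1-(1-λ)u)/n]·∑_{i=1}^n 1/(1-(1-λᵢ)u) is increasing in u ∈ (0,1). Equivalently, for u ∈ (0,1), ((1-λ)u/(1-(1-λ)u)) · ∑_{i=1}^n 1/(1-(1-λᵢ)u) ≤ ∑_{i=1}^n (1-λᵢ)u/(1-(1-λᵢ)u)². -/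
open Finset

/-!
Write `dᵢ = 1 - (1 - λᵢ) u`, `D = 1 - (1 - λ) u`, `S = ∑ 1 / dᵢ`, `Q = ∑ 1 / dᵢ²` and
`T = ∑ (1 - λᵢ) / dᵢ² = S'`. Since `(1 - λᵢ) u = 1 - dᵢ` and `(1 - λ) u = 1 - D`, one has
`u (D T - (1 - λ) S) = D Q - S`. The sequences `dᵢ` and `1 / dᵢ²` are oppositely ordered, so
Chebyshev's sum inequality gives `n S ≤ (∑ dᵢ) Q`, and `∑ dᵢ ≤ n D` is exactly the hypothesis on
`λ`. Hence `(1 - λ) S ≤ D T`: this is the sign of the derivative of `D S / n`, and, multiplied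
by `u / D`, the second inequality.
-/

theorem card_mul_sum_one_div_le_sum_mul_sum_one_div_sq {ι : Type*} [Fintype ι] {d : ι → ℝ}
    (hd : ∀ i, 0 < d i) :
    Fintype.card ι * ∑ i, 1 / d i ≤ (∑ i, d i) * ∑ i, 1 / d i ^ 2 := by
  have hanti : Antivary d fun i ↦ 1 / d i ^ 2 := fun i j hij ↦
    ((pow_lt_pow_iff_left₀ (hd j).le (hd i).le two_ne_zero).1 <|
      (one_div_lt_one_div (pow_pos (hd i) 2) (pow_pos (hd j) 2)).1 hij).le
  calc _ = (Fintype.card ι : ℝ) * ∑ i, d i * (1 / d i ^ 2) := by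
        congr 1
        exact sum_congr rfl fun i _ ↦ by field_simp [(hd i).ne']
    _ ≤ _ := hanti.card_mul_sum_le_sum_mul_sum

theorem sum_one_div_le_mul_sum_one_div_sq {ι : Type*} [Fintype ι] {d : ι → ℝ} {D : ℝ}
    (hd : ∀ i, 0 < d i) (hD : ∑ i, d i ≤ Fintype.card ι * D) :
    ∑ i, 1 / d i ≤ D * ∑ i, 1 / d i ^ 2 := by
  rcases isEmpty_or_nonempty ι with _ | _
  · simp
  have hcard : (0 : ℝ) < Fintype.card ι := by exact_mod_cast Fintype.card_pos
  refine le_of_mul_le_mul_left ?_ hcard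
  calc _ ≤ (∑ i, d i) * ∑ i, 1 / d i ^ 2 := card_mul_sum_one_div_le_sum_mul_sum_one_div_sq hd
    _ ≤ Fintype.card ι * D * ∑ i, 1 / d i ^ 2 := by gcongr
    _ = _ := by ring

theorem sum_le_card_mul_of_mean_le {ι : Type*} [Fintype ι] {a : ι → ℝ} {m : ℝ}
    (h : 1 / Fintype.card ι * ∑ i, a i ≤ m) : ∑ i, a i ≤ Fintype.card ι * m := by
  rcases isEmpty_or_nonempty ι with _ | _
  · simp
  have hcard : (0 : ℝ) < Fintype.card ι := by exact_mod_cast Fintype.card_pos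
  rwa [one_div, inv_mul_le_iff₀ hcard] at h

theorem hasDerivAt_one_div_one_sub_mul {c u : ℝ} (h : 1 - c * u ≠ 0) :
    HasDerivAt (fun u ↦ 1 / (1 - c * u)) (c / (1 - c * u) ^ 2) u := by
  have hd : HasDerivAt (fun u ↦ 1 - c * u) (-c) u := by
    simpa using ((hasDerivAt_id u).const_mul c).const_sub 1
  exact ((hasDerivAt_const u 1).fun_div hd h).congr_deriv (by ring)

theorem one_sub_one_sub_mul_pos {a u : ℝ} (ha : 0 ≤ a) (hu₀ : 0 ≤ u) (hu₁ : u < 1) :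
    0 < 1 - (1 - a) * u := by
  nlinarith [mul_nonneg ha hu₀]

section SeriesSystem

variable {ι : Type*} [Fintype ι] {lam : ι → ℝ} {l u : ℝ}

theorem sum_one_sub_one_sub_mul_le (hl : ∑ i, lam i ≤ Fintype.card ι * l) (hu : 0 ≤ u) :
    ∑ i, (1 - (1 - lam i) * u) ≤ Fintype.card ι * (1 - (1 - l) * u) := by
  have hsum : ∑ i, (1 - (1 - lam i) * u) = Fintype.card ι * (1 - u) + (∑ i, lam i) * u := by
    simp only [sum_sub_distrib, sub_mul, one_mul, sum_mul, sum_const, card_univ, nsmul_eq_mul]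
    ring
  nlinarith [mul_le_mul_of_nonneg_right hl hu]

theorem mul_sum_div_sq_eq :
    u * ∑ i, (1 - lam i) / (1 - (1 - lam i) * u) ^ 2 =
      ∑ i, 1 / (1 - (1 - lam i) * u) ^ 2 - ∑ i, 1 / (1 - (1 - lam i) * u) := by
  rw [mul_sum, ← sum_sub_distrib]
  refine sum_congr rfl fun i _ ↦ ?_
  field_simp
  ring

theorem one_sub_mul_sum_one_div_le (hlam : ∀ i, 0 < lam i)
    (hl : ∑ i, lam i ≤ Fintype.card ι * l) (hu : u ∈ Set.Ioo 0 1) :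
    (1 - l) * ∑ i, 1 / (1 - (1 - lam i) * u) ≤
      (1 - (1 - l) * u) * ∑ i, (1 - lam i) / (1 - (1 - lam i) * u) ^ 2 := by
  have hS : ∑ i, 1 / (1 - (1 - lam i) * u) ≤
      (1 - (1 - l) * u) * ∑ i, 1 / (1 - (1 - lam i) * u) ^ 2 :=
    sum_one_div_le_mul_sum_one_div_sq (fun i ↦ one_sub_one_sub_mul_pos (hlam i).le hu.1.le hu.2)
      (sum_one_sub_one_sub_mul_le hl hu.1.le)
  have hT : u * _ = _ := mul_sum_div_sq_eq (lam := lam)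
  refine le_of_mul_le_mul_left ?_ hu.1
  -- `u * (D * T - (1 - l) * S) = D * Q - S`
  linear_combination hS - (1 - (1 - l) * u) * hT

theorem hasDerivAt_sum_one_div_one_sub_mul (hd : ∀ i, 1 - (1 - lam i) * u ≠ 0) :
    HasDerivAt (fun u ↦ ∑ i, 1 / (1 - (1 - lam i) * u))
      (∑ i, (1 - lam i) / (1 - (1 - lam i) * u) ^ 2) u :=
  HasDerivAt.fun_sum fun i _ ↦ hasDerivAt_one_div_one_sub_mul (hd i)

theorem monotoneOn_one_sub_mul_div_mul_sum (hlam : ∀ i, 0 < lam i)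
    (hl : ∑ i, lam i ≤ Fintype.card ι * l) {c : ℝ} (hc : 0 ≤ c) :
    MonotoneOn (fun u ↦ (1 - (1 - l) * u) / c * ∑ i, 1 / (1 - (1 - lam i) * u))
      (Set.Ioo 0 1) := by
  have hderiv : ∀ u ∈ Set.Ioo (0 : ℝ) 1,
      HasDerivAt (fun u ↦ (1 - (1 - l) * u) / c * ∑ i, 1 / (1 - (1 - lam i) * u))
        (((1 - (1 - l) * u) * ∑ i, (1 - lam i) / (1 - (1 - lam i) * u) ^ 2 -
          (1 - l) * ∑ i, 1 / (1 - (1 - lam i) * u)) / c) u := by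
    intro u hu
    have hd i : 1 - (1 - lam i) * u ≠ 0 :=
      (one_sub_one_sub_mul_pos (hlam i).le hu.1.le hu.2).ne'
    have hD : HasDerivAt (fun u ↦ (1 - (1 - l) * u) / c) (-(1 - l) / c) u := by
      simpa using (((hasDerivAt_id u).const_mul (1 - l)).const_sub 1).div_const c
    exact (hD.mul (hasDerivAt_sum_one_div_one_sub_mul hd)).congr_deriv (by ring)
  refine monotoneOn_of_deriv_nonneg (convex_Ioo 0 1)
    (fun u hu ↦ (hderiv u hu).continuousAt.continuousWithinAt) (fun u hu ↦ ?_) (fun u hu ↦ ?_)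
    <;> rw [interior_Ioo] at hu
  · exact (hderiv u hu).differentiableAt.differentiableWithinAt
  · rw [(hderiv u hu).deriv]
    exact div_nonneg (sub_nonneg.2 (one_sub_mul_sum_one_div_le hlam hl hu)) hc

theorem one_sub_mul_div_mul_sum_le (hlam : ∀ i, 0 < lam i)
    (hl : ∑ i, lam i ≤ Fintype.card ι * l) (hl₀ : 0 ≤ l) (hu : u ∈ Set.Ioo 0 1) :
    (1 - l) * u / (1 - (1 - l) * u) * ∑ i, 1 / (1 - (1 - lam i) * u) ≤
      ∑ i, (1 - lam i) * u / (1 - (1 - lam i) * u) ^ 2 := by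
  have hD : 0 < 1 - (1 - l) * u := one_sub_one_sub_mul_pos hl₀ hu.1.le hu.2
  calc _ = u / (1 - (1 - l) * u) * ((1 - l) * ∑ i, 1 / (1 - (1 - lam i) * u)) := by ring
    _ ≤ u / (1 - (1 - l) * u) *
          ((1 - (1 - l) * u) * ∑ i, (1 - lam i) / (1 - (1 - lam i) * u) ^ 2) :=
      mul_le_mul_of_nonneg_left (one_sub_mul_sum_one_div_le hlam hl hu)
        (div_nonneg hu.1.le hD.le)
    _ = u * ∑ i, (1 - lam i) / (1 - (1 - lam i) * u) ^ 2 := by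
      rw [div_mul_eq_mul_div, mul_left_comm, mul_div_cancel_left₀ _ hD.ne']
    _ = _ := by
      rw [mul_sum]
      exact sum_congr rfl fun i _ ↦ by ring

end SeriesSystem

theorem series_po_relative_ageing_homog {n : ℕ} (lam : Fin n → ℝ) (l : ℝ)
    (hlam : ∀ i, 0 < lam i)
    (hl : l ≥ (1 / n) * ∑ i, lam i) :
    MonotoneOn (fun u : ℝ =>
      (1 - (1 - l) * u) / n * ∑ i, 1 / (1 - (1 - lam i) * u))
      (Set.Ioo (0:ℝ) 1) ∧
    ∀ u : ℝ, u ∈ Set.Ioo (0:ℝ) 1 →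
      (1 - l) * u / (1 - (1 - l) * u) * ∑ i, 1 / (1 - (1 - lam i) * u) ≤
        ∑ i, (1 - lam i) * u / (1 - (1 - lam i) * u) ^ 2 := by
  have hl' : ∑ i, lam i ≤ Fintype.card (Fin n) * l :=
    sum_le_card_mul_of_mean_le (by rwa [Fintype.card_fin])
  have hl₀ : 0 ≤ l := le_trans (mul_nonneg (by positivity) (sum_nonneg fun i _ ↦ (hlam i).le)) hl
  exact ⟨monotoneOn_one_sub_mul_div_mul_sum hlam hl' n.cast_nonneg,
    fun u hu ↦ one_sub_mul_div_mul_sum_le hlam hl' hl₀ hu⟩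
end
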